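/- arXiv:2401.10618 — 3 statements merged into one kernel-verified Lean document; each statement's English description precedes it below -/
import Mathlib

section
/- Let L be (n+2)-dimensional with form of signature (n+1,1), 𝔮 ∈ L nonzero, p ∈ M_𝔮 (so ⟨p,p⟩=0, ⟨p,𝔮⟩=-1), Y ∈ 𝔰𝔬(L) skew-adjoint, and v ∈ L with ⟨v,p⟩ = ⟨v,𝔮⟩ = 0. Define the vector field value Y(p) = -Yp - ⟨Yp,𝔮⟩p. Then ⟨Y(p), v⟩ = B(Y, p∧v), where B(Y₁,Y₂) = (1/2)·trace(Y₁Y₂). -/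
open Module

lemma trace_smulRight_aux {L : Type*} [AddCommGroup L] [Module ℝ L]
    [Module.Free ℝ L] [Module.Finite ℝ L] (f : L →ₗ[ℝ] ℝ) (m : L) :
    LinearMap.trace ℝ L (f.smulRight m) = f m := by
  have h : f.smulRight m = dualTensorHom ℝ L L (f ⊗ₜ m) := rfl
  rw [h, LinearMap.trace_eq_contract_apply, contractLeft_apply]

/-- for `p` in the conic section, `Y ∈ 𝔰𝔬(L)` and `v` tangent at `p`,
`⟨Y(p), v⟩ = B(Y, p∧v)` where `Y(p) = -Yp - ⟨Yp,𝔮⟩p` and `B(Y₁,Y₂) = ½·tr(Y₁Y₂)`. -/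
theorem killing_field_moment_identity
    (n : ℕ) (L : Type*) [AddCommGroup L] [Module ℝ L]
    (B : L →ₗ[ℝ] L →ₗ[ℝ] ℝ) (hsymm : ∀ u w, B u w = B w u)
    -- signature (n+1,1)
    (e : Basis (Fin (n + 2)) ℝ L)
    (he : ∀ i j, B (e i) (e j) =
      if i = j then (if (i : ℕ) < n + 1 then (1 : ℝ) else -1) else 0)
    (q p v : L) (hq : q ≠ 0)
    (hp : B p p = 0) (hpq : B p q = -1)
    (hvp : B v p = 0) (hvq : B v q = 0)
    (Y : L →ₗ[ℝ] L) (hYskew : ∀ u w : L, B (Y u) w + B u (Y w) = 0)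
    (P : L →ₗ[ℝ] L) (hP : ∀ c : L, P c = (B p c) • v - (B v c) • p) :
    B (-(Y p) - (B (Y p) q) • p) v = (1 / 2) * LinearMap.trace ℝ L (Y ∘ₗ P) := by
  haveI : Module.Free ℝ L := Module.Free.of_basis e
  haveI : Module.Finite ℝ L := Module.Finite.of_basis e
  have hYP : Y ∘ₗ P = (B p).smulRight (Y v) - (B v).smulRight (Y p) := by
    ext c
    simp [hP c, map_sub, smul_sub]
  rw [hYP, map_sub (LinearMap.trace ℝ L), trace_smulRight_aux, trace_smulRight_aux]
  have h1 : B p (Y v) = - B v (Y p) := by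
    have h := hYskew v p
    have h2 : B p (Y v) = B (Y v) p := hsymm _ _
    linarith
  have hpv : B p v = 0 := by rw [hsymm]; exact hvp
  have h3 : B (Y p) v = B v (Y p) := hsymm _ _
  simp [map_sub, map_neg, map_smul, hpv, h1, h3]
  ring
end

section
/- With L of signature (4,1), 𝔮 ∈ L nonzero, and 𝔬 ∈ E_𝔮: for any p in the light cone with ⟨p,𝔮⟩ = -1, any v,w ∈ L with ⟨v,p⟩=⟨v,𝔮⟩=⟨w,p⟩=⟨w,𝔮⟩=0, and any Y = a∧b with a,b ∈ 𝔮^⊥, the identity det(𝔬 ∧ v ∧ w ∧ a ∧ b) = -det(p ∧ 𝔮 ∧ (⟨a,p⟩b - ⟨b,p⟩a) ∧ v ∧ w) holds in Λ⁵L ≅ ℝ. -/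
open Module ExteriorAlgebra

section Aux

variable {V : Type*} [AddCommGroup V] [Module ℝ V]

private lemma upd0 (x0 x1 x2 x3 x4 y : V) :
    Function.update ![x0,x1,x2,x3,x4] (0:Fin 5) y = ![y,x1,x2,x3,x4] := by
  funext i; fin_cases i <;> simp [Function.update]

private lemma upd2 (x0 x1 x2 x3 x4 y : V) :
    Function.update ![x0,x1,x2,x3,x4] (2:Fin 5) y = ![x0,x1,y,x3,x4] := by
  funext i; fin_cases i <;> simp [Function.update]

private lemma upd3 (x0 x1 x2 x3 x4 y : V) :
    Function.update ![x0,x1,x2,x3,x4] (3:Fin 5) y = ![x0,x1,x2,y,x4] := by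
  funext i; fin_cases i <;> simp [Function.update]

private lemma upd4 (x0 x1 x2 x3 x4 y : V) :
    Function.update ![x0,x1,x2,x3,x4] (4:Fin 5) y = ![x0,x1,x2,x3,y] := by
  funext i; fin_cases i <;> simp [Function.update]

variable (F : V [⋀^Fin 5]→ₗ[ℝ] ℝ)

private lemma alt_add0 (y z x1 x2 x3 x4 : V) :
    F ![y + z, x1, x2, x3, x4] = F ![y,x1,x2,x3,x4] + F ![z,x1,x2,x3,x4] := by
  have h := F.map_update_add ![y,x1,x2,x3,x4] (0:Fin 5) y z
  simpa [upd0] using h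

private lemma alt_sub2 (x0 x1 x3 x4 : V) (r s : ℝ) (y z : V) :
    F ![x0, x1, r • y - s • z, x3, x4]
      = r * F ![x0,x1,y,x3,x4] - s * F ![x0,x1,z,x3,x4] := by
  have h := F.map_update_add ![x0,x1,y,x3,x4] (2:Fin 5) (r • y) (-(s • z))
  have hy := F.map_update_smul ![x0,x1,y,x3,x4] (2:Fin 5) r y
  have hz := F.map_update_smul ![x0,x1,z,x3,x4] (2:Fin 5) (-s) z
  rw [upd2, upd2, upd2] at h
  rw [upd2, upd2] at hy
  rw [upd2, upd2] at hz
  have : r • y - s • z = r • y + -(s • z) := by abel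
  rw [this, h, hy]
  have : -(s • z) = (-s) • z := by simp
  rw [this, hz]
  simp only [smul_eq_mul]; ring

private lemma alt_exp3 (x0 x1 x2 x4 : V) (r s : ℝ) (y z u : V) :
    F ![x0, x1, x2, r • y + s • z + u, x4]
      = r * F ![x0,x1,x2,y,x4] + s * F ![x0,x1,x2,z,x4] + F ![x0,x1,x2,u,x4] := by
  have h1 := F.map_update_add ![x0,x1,x2,y,x4] (3:Fin 5) (r • y + s • z) u
  have h2 := F.map_update_add ![x0,x1,x2,y,x4] (3:Fin 5) (r • y) (s • z)
  have hy := F.map_update_smul ![x0,x1,x2,y,x4] (3:Fin 5) r y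
  have hz := F.map_update_smul ![x0,x1,x2,z,x4] (3:Fin 5) s z
  simp only [upd3] at h1 h2 hy hz
  rw [h1, h2, hy, hz]; simp only [smul_eq_mul] <;> ring

private lemma alt_exp4 (x0 x1 x2 x3 : V) (r s : ℝ) (y z u : V) :
    F ![x0, x1, x2, x3, r • y + s • z + u]
      = r * F ![x0,x1,x2,x3,y] + s * F ![x0,x1,x2,x3,z] + F ![x0,x1,x2,x3,u] := by
  have h1 := F.map_update_add ![x0,x1,x2,x3,y] (4:Fin 5) (r • y + s • z) u
  have h2 := F.map_update_add ![x0,x1,x2,x3,y] (4:Fin 5) (r • y) (s • z)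
  have hy := F.map_update_smul ![x0,x1,x2,x3,y] (4:Fin 5) r y
  have hz := F.map_update_smul ![x0,x1,x2,x3,z] (4:Fin 5) s z
  simp only [upd4] at h1 h2 hy hz
  rw [h1, h2, hy, hz]; simp only [smul_eq_mul] <;> ring

/-- swap slots 3 and 4. -/
private lemma alt_swap34 (x0 x1 x2 y z : V) :
    F ![x0,x1,x2,y,z] = -F ![x0,x1,x2,z,y] := by
  have h := F.map_swap ![x0,x1,x2,z,y] (show (3:Fin 5) ≠ 4 by decide)
  have he : (![x0,x1,x2,z,y] ∘ Equiv.swap (3:Fin 5) 4) = ![x0,x1,x2,y,z] := by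
    funext i; fin_cases i <;> simp [Equiv.swap_apply_def]
  rw [he] at h
  rw [h]

/-- `F ![p,q,b,v,w] = F ![p,v,w,q,b]` (even permutation). -/
private lemma alt_perm (x0 x1 x2 x3 x4 : V) :
    F ![x0,x1,x2,x3,x4] = F ![x0,x3,x4,x1,x2] := by
  have h1 := F.map_swap ![x0,x1,x2,x3,x4] (show (1:Fin 5) ≠ 3 by decide)
  have e1 : (![x0,x1,x2,x3,x4] ∘ Equiv.swap (1:Fin 5) 3) = ![x0,x3,x2,x1,x4] := by
    funext i; fin_cases i <;> simp [Equiv.swap_apply_def]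
  rw [e1] at h1
  have h2 := F.map_swap ![x0,x3,x2,x1,x4] (show (2:Fin 5) ≠ 4 by decide)
  have e2 : (![x0,x3,x2,x1,x4] ∘ Equiv.swap (2:Fin 5) 4) = ![x0,x3,x4,x1,x2] := by
    funext i; fin_cases i <;> simp [Equiv.swap_apply_def]
  rw [e2] at h2
  rw [h2, h1, neg_neg]

private lemma dep_of_mem {V : Type*} [AddCommGroup V] [Module ℝ V] [FiniteDimensional ℝ V]
    (S : Submodule ℝ V) {n : ℕ} (v : Fin n → V) (hmem : ∀ i, v i ∈ S)
    (hn : finrank ℝ S < n) : ¬ LinearIndependent ℝ v := by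
  intro h
  have h1 : finrank ℝ (Submodule.span ℝ (Set.range v)) = n := by
    rw [finrank_span_eq_card h, Fintype.card_fin]
  have h2 : Submodule.span ℝ (Set.range v) ≤ S :=
    Submodule.span_le.mpr (by rintro _ ⟨i, rfl⟩; exact hmem i)
  have := Submodule.finrank_mono h2
  omega

end Aux

/-- with `L` of signature `(4,1)`, `𝔬 ∈ E_𝔮`, `p` in the light cone
with `⟨p,𝔮⟩ = -1`, `v, w` tangent at `p`, and `a, b ∈ 𝔮^⊥`, the identity
`det(𝔬 ∧ v ∧ w ∧ a ∧ b) = -det(p ∧ 𝔮 ∧ (⟨a,p⟩b - ⟨b,p⟩a) ∧ v ∧ w)` holds in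
`⋀⁵L ≅ ℝ`. -/
theorem moment_wedge_identity
    (L : Type*) [AddCommGroup L] [Module ℝ L]
    (B : L →ₗ[ℝ] L →ₗ[ℝ] ℝ) (hsymm : ∀ u u' : L, B u u' = B u' u)
    -- signature (4,1)
    (e : Basis (Fin 5) ℝ L)
    (he : ∀ i j, B (e i) (e j) =
      if i = j then (if (i : ℕ) < 4 then (1 : ℝ) else -1) else 0)
    (det : ExteriorAlgebra ℝ L →ₗ[ℝ] ℝ) (hdet : det ≠ 0)
    (q o p v w a b : L)
    (ho : B o q = -1)
    (hp : B p p = 0) (hpq : B p q = -1)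
    (hv : B v p = 0) (hvq : B v q = 0)
    (hw : B w p = 0) (hwq : B w q = 0)
    (ha : B a q = 0) (hb : B b q = 0) :
    det (ι ℝ o * ι ℝ v * ι ℝ w * ι ℝ a * ι ℝ b) =
      -det (ι ℝ p * ι ℝ q * ι ℝ ((B a p) • b - (B b p) • a) * ι ℝ v * ι ℝ w) := by
  have hfin : FiniteDimensional ℝ L := Module.Finite.of_basis e
  have hrank : finrank ℝ L = 5 := by
    rw [finrank_eq_card_basis e, Fintype.card_fin]
  set F : L [⋀^Fin 5]→ₗ[ℝ] ℝ := det.compAlternatingMap (ιMulti ℝ 5) with hF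
  have hprod : ∀ x0 x1 x2 x3 x4 : L,
      det (ι ℝ x0 * ι ℝ x1 * ι ℝ x2 * ι ℝ x3 * ι ℝ x4) = F ![x0,x1,x2,x3,x4] := by
    intro x0 x1 x2 x3 x4
    simp [hF, ExteriorAlgebra.ιMulti_apply, List.ofFn_succ, mul_assoc]
  -- kernel of B q has dimension 4
  have hkerq : finrank ℝ (LinearMap.ker (B q)) = 4 := by
    have hsurj : LinearMap.range (B q) = ⊤ := by
      rw [LinearMap.range_eq_top]
      intro x
      refine ⟨(-x) • p, ?_⟩
      rw [map_smul]
      simp [hsymm q p, hpq]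
    have h := LinearMap.finrank_range_add_finrank_ker (B q)
    rw [hsurj, finrank_top, finrank_self, hrank] at h
    omega
  -- tangent space T = ker (B q) ⊓ ker (B p) has dimension 3
  set G : L →ₗ[ℝ] ℝ × ℝ := (B q).prod (B p) with hG
  have hkerT : finrank ℝ (LinearMap.ker G) = 3 := by
    have hsurj : LinearMap.range G = ⊤ := by
      rw [LinearMap.range_eq_top]
      rintro ⟨x, y⟩
      refine ⟨(-x - y * B q q) • p + (-y) • q, ?_⟩
      have h1 : B q p = -1 := by rw [hsymm q p]; exact hpq
      simp only [hG, LinearMap.prod_apply, Pi.prod, Function.prod_apply, map_add, map_smul, smul_eq_mul,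
        h1, hp, hpq]
      rw [Prod.smul_mk, Prod.smul_mk, Prod.mk_add_mk, Prod.mk.injEq]
      constructor <;> (simp only [smul_eq_mul]; ring)
    have h := LinearMap.finrank_range_add_finrank_ker G
    rw [hsurj, finrank_top, hrank] at h
    simp only [finrank_prod, finrank_self] at h
    omega
  -- memberships
  have hmemq : ∀ u : L, B u q = 0 → u ∈ LinearMap.ker (B q) := by
    intro u hu; rw [LinearMap.mem_ker, ← hsymm u q]; exact hu
  have hmemT : ∀ u : L, B u q = 0 → B u p = 0 → u ∈ LinearMap.ker G := by
    intro u h1 h2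
    rw [LinearMap.mem_ker]
    have : G u = (B q u, B p u) := rfl
    rw [this, ← hsymm u q, ← hsymm u p, h1, h2]
    rfl
  -- step 1 : F ![o,v,w,a,b] = F ![p,v,w,a,b]
  have step1 : F ![o,v,w,a,b] = F ![p,v,w,a,b] := by
    have hop : B (o - p) q = 0 := by
      rw [map_sub, LinearMap.sub_apply, ho, hpq]; ring
    have hdep : ¬ LinearIndependent ℝ ![o - p, v, w, a, b] := by
      apply dep_of_mem (LinearMap.ker (B q))
      · intro i
        fin_cases i
        exacts [hmemq _ hop, hmemq v hvq, hmemq w hwq, hmemq a ha, hmemq b hb]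
      · omega
    have h0 : F ![o - p, v, w, a, b] = 0 := F.map_linearDependent _ hdep
    have h1 : F ![p + (o - p), v, w, a, b] = F ![p,v,w,a,b] + F ![o-p,v,w,a,b] :=
      alt_add0 F _ _ _ _ _ _
    have h2 : p + (o - p) = o := by abel
    rw [h2] at h1
    rw [h1, h0, add_zero]
  -- decomposition of a and b
  set βa : ℝ := -(B a p) with hβa
  set βb : ℝ := -(B b p) with hβb
  set a' : L := a - (βa * B q q) • p - βa • q with ha'
  set b' : L := b - (βb * B q q) • p - βb • q with hb'
  have hqp : B q p = -1 := by rw [hsymm q p]; exact hpq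
  have ha'q : B a' q = 0 := by
    simp only [ha', map_sub, LinearMap.sub_apply, map_smul, LinearMap.smul_apply,
      smul_eq_mul, ha, hpq, hβa]
    ring
  have ha'p : B a' p = 0 := by
    simp only [ha', map_sub, LinearMap.sub_apply, map_smul, LinearMap.smul_apply,
      smul_eq_mul, hp, hqp, hβa]
    ring
  have hb'q : B b' q = 0 := by
    simp only [hb', map_sub, LinearMap.sub_apply, map_smul, LinearMap.smul_apply,
      smul_eq_mul, hb, hpq, hβb]
    ring
  have hb'p : B b' p = 0 := by
    simp only [hb', map_sub, LinearMap.sub_apply, map_smul, LinearMap.smul_apply,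
      smul_eq_mul, hp, hqp, hβb]
    ring
  have hadecomp : a = (βa * B q q) • p + βa • q + a' := by rw [ha']; abel
  have hbdecomp : b = (βb * B q q) • p + βb • q + b' := by rw [hb']; abel
  -- repeated-entry vanishing lemmas
  have z1 : F ![p,v,w,p,b] = 0 :=
    F.map_eq_zero_of_eq _ (show (![p,v,w,p,b] : Fin 5 → L) 0 = ![p,v,w,p,b] 3 by simp)
      (show (0:Fin 5) ≠ 3 by decide)
  have z2 : F ![p,v,w,a',p] = 0 :=
    F.map_eq_zero_of_eq _ (show (![p,v,w,a',p] : Fin 5 → L) 0 = ![p,v,w,a',p] 4 by simp)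
      (show (0:Fin 5) ≠ 4 by decide)
  have z3 : F ![p,v,w,q,p] = 0 :=
    F.map_eq_zero_of_eq _ (show (![p,v,w,q,p] : Fin 5 → L) 0 = ![p,v,w,q,p] 4 by simp)
      (show (0:Fin 5) ≠ 4 by decide)
  have z4 : F ![p,v,w,q,q] = 0 :=
    F.map_eq_zero_of_eq _ (show (![p,v,w,q,q] : Fin 5 → L) 3 = ![p,v,w,q,q] 4 by simp)
      (show (3:Fin 5) ≠ 4 by decide)
  -- step 2 : F ![p,v,w,a',b'] = 0
  have z5 : F ![p,v,w,a',b'] = 0 := by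
    apply F.map_linearDependent
    intro hLI
    have h4 : LinearIndependent ℝ (![p,v,w,a',b'] ∘ Fin.succ) :=
      hLI.comp Fin.succ (Fin.succ_injective 4)
    have he4 : (![p,v,w,a',b'] ∘ Fin.succ) = ![v,w,a',b'] := by
      funext i; fin_cases i <;> rfl
    rw [he4] at h4
    refine dep_of_mem (LinearMap.ker G) ![v,w,a',b'] ?_ (by omega) h4
    intro i
    fin_cases i
    exacts [hmemT v hvq hv, hmemT w hwq hw, hmemT a' ha'q ha'p, hmemT b' hb'q hb'p]
  -- step 3: replace a', b' by a, b in slot 4 next to q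
  have ra : F ![p,v,w,q,a'] = F ![p,v,w,q,a] := by
    have h := alt_exp4 F p v w q (βa * B q q) βa p q a'
    rw [← hadecomp, z3, z4] at h
    rw [h]; ring
  have rb : F ![p,v,w,q,b'] = F ![p,v,w,q,b] := by
    have h := alt_exp4 F p v w q (βb * B q q) βb p q b'
    rw [← hbdecomp, z3, z4] at h
    rw [h]; ring
  -- step 4: main expansion
  have step2 : F ![p,v,w,a,b] = βa * F ![p,v,w,q,b] - βb * F ![p,v,w,q,a] := by
    have h1 : F ![p,v,w,a,b]
        = (βa * B q q) * F ![p,v,w,p,b] + βa * F ![p,v,w,q,b] + F ![p,v,w,a',b] := by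
      conv_lhs => rw [hadecomp]
      exact alt_exp3 F p v w b (βa * B q q) βa p q a'
    have h2 : F ![p,v,w,a',b]
        = (βb * B q q) * F ![p,v,w,a',p] + βb * F ![p,v,w,a',q] + F ![p,v,w,a',b'] := by
      conv_lhs => rw [hbdecomp]
      exact alt_exp4 F p v w a' (βb * B q q) βb p q b'
    have h3 : F ![p,v,w,a',q] = -F ![p,v,w,q,a'] := alt_swap34 F p v w a' q
    rw [h1, h2, h3, z1, z2, z5, ra]
    ring
  -- step 5: RHS
  have hrhs : F ![p, q, (B a p) • b - (B b p) • a, v, w]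
      = (B a p) * F ![p,v,w,q,b] - (B b p) * F ![p,v,w,q,a] := by
    have h1 : F ![p, q, (B a p) • b - (B b p) • a, v, w]
        = (B a p) * F ![p,q,b,v,w] - (B b p) * F ![p,q,a,v,w] :=
      alt_sub2 F p q v w (B a p) (B b p) b a
    have h2 : F ![p,q,b,v,w] = F ![p,v,w,q,b] := alt_perm F p q b v w
    have h3 : F ![p,q,a,v,w] = F ![p,v,w,q,a] := alt_perm F p q a v w
    rw [h1, h2, h3]
  rw [hprod, hprod, step1, step2, hrhs, hβa, hβb]
  ring
end

section
/- Let L have signature (4,1), 𝔮 ∈ L with ⟨𝔮,𝔮⟩ = -K, and let x, N ∈ L satisfy ⟨x,x⟩ = 0, ⟨x,𝔮⟩ = -1, ⟨N,N⟩ = 1, ⟨N,x⟩ = 0, ⟨N,𝔮⟩ = 0. Let H, m ∈ ℝ with m² - 2Hm - K = 0 and m ≠ 0, m ≠ H. Define x̂ = (N + Hx + 𝔮/m)/(m - H). Then ⟨x̂,x̂⟩ = 0 and ⟨x̂,𝔮⟩ = -1. -/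
open Module

/-- algebraic core of the parallel CMC surface construction:
`x̂ = (N + Hx + 𝔮/m)/(m - H)` again lies in the conic section `M_𝔮`. -/
theorem parallel_surface_in_conic_section
    (L : Type*) [AddCommGroup L] [Module ℝ L]
    (B : L →ₗ[ℝ] L →ₗ[ℝ] ℝ) (hsymm : ∀ u v, B u v = B v u)
    -- signature (4,1)
    (e : Basis (Fin 5) ℝ L)
    (he : ∀ i j, B (e i) (e j) =
      if i = j then (if (i : ℕ) < 4 then (1 : ℝ) else -1) else 0)
    (K H m : ℝ) (x N q : L)
    (hq : B q q = -K)
    (hx : B x x = 0) (hxq : B x q = -1)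
    (hN : B N N = 1) (hNx : B N x = 0) (hNq : B N q = 0)
    (hm : m ^ 2 - 2 * H * m - K = 0) (hm0 : m ≠ 0) (hmH : m ≠ H) :
    B ((m - H)⁻¹ • (N + H • x + m⁻¹ • q)) ((m - H)⁻¹ • (N + H • x + m⁻¹ • q)) = 0 ∧
    B ((m - H)⁻¹ • (N + H • x + m⁻¹ • q)) q = -1 := by
  have hxN : B x N = 0 := by rw [hsymm]; exact hNx
  have hqx : B q x = -1 := by rw [hsymm]; exact hxq
  have hqN : B q N = 0 := by rw [hsymm]; exact hNq
  have hK : K = m ^ 2 - 2 * H * m := by linarith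
  have hmH' : m - H ≠ 0 := sub_ne_zero.mpr hmH
  constructor <;>
  · simp only [map_add, map_smul, LinearMap.add_apply, LinearMap.smul_apply, smul_eq_mul,
      hx, hxq, hN, hNx, hNq, hq, hxN, hqx, hqN, hK]
    field_simp
    ring
end
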